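/- arXiv:2211.12729 — 3 statements merged into one kernel-verified Lean document; each statement's English description precedes it below -/
import Mathlib

section
/- Let S be a compact connected smooth hypersurface in ℝ^{2n} (n ≥ 2) with everywhere positive Gaussian curvature, let Π₁(x,y) = x and Π₂(x,y) = y be the coordinate projections S → ℝⁿ, and let W₁ be the set of points of Π₁(S) that are regular values of Π₁. Then for every x ∈ W₁, the set Π₂(S_x), where S_x = Π₁⁻¹{x}, is a smooth hypersurface in ℝⁿ whose Gaussian curvature is bounded below by a positive constant independent of x. -/
/- STATEMENT 2:
Let S be a compact connected smooth hypersurface in ℝ^{2n} (n ≥ 2) with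
everywhere positive Gaussian curvature (positive definite second fundamental
form), let Π₁(x,y) = x and Π₂(x,y) = y be the coordinate projections S → ℝⁿ,
and let W₁ be the set of points of Π₁(S) that are regular values of Π₁.  Then
for every x ∈ W₁ the set Π₂(S_x), where S_x = Π₁⁻¹{x}, is a smooth
hypersurface in ℝⁿ whose Gaussian curvature is bounded below by a positive
constant c independent of x: for every unit normal field ν along N = Π₂(S_x),
the second fundamental form v ↦ -⟪dν(v), v⟫ is (up to the orientation of ν)
bounded below by c‖v‖² on tangent vectors, so every principal curvature of N
has magnitude ≥ c and hence the Gaussian curvature of N is ≥ c^{n-1} > 0. -/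

open MeasureTheory

noncomputable section

abbrev En (n : ℕ) : Type := EuclideanSpace ℝ (Fin n)

abbrev E2n (n : ℕ) : Type := EuclideanSpace ℝ (Fin n ⊕ Fin n)

def P1 {n : ℕ} (z : E2n n) : En n := WithLp.toLp 2 (fun i => z (Sum.inl i))

def P2 {n : ℕ} (z : E2n n) : En n := WithLp.toLp 2 (fun i => z (Sum.inr i))

/-- `S` is a smooth hypersurface: near each of its points it is the zero set
of a smooth defining function with nonvanishing differential. -/
def IsSmoothHypersurface {E : Type*} [NormedAddCommGroup E] [NormedSpace ℝ E]
    (S : Set E) : Prop :=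
  ∀ p ∈ S, ∃ (U : Set E) (f : E → ℝ), IsOpen U ∧ p ∈ U ∧ ContDiff ℝ (⊤ : ℕ∞) f ∧
    S ∩ U = {q ∈ U | f q = 0} ∧ ∀ q ∈ S ∩ U, fderiv ℝ f q ≠ 0

/-- `S` is a smooth hypersurface with positive Gaussian curvature
(positive definite second fundamental form). -/
def IsPosCurvHypersurface {E : Type*} [NormedAddCommGroup E] [NormedSpace ℝ E]
    (S : Set E) : Prop :=
  ∀ p ∈ S, ∃ (U : Set E) (f : E → ℝ), IsOpen U ∧ p ∈ U ∧ ContDiff ℝ (⊤ : ℕ∞) f ∧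
    S ∩ U = {q ∈ U | f q = 0} ∧
    ∀ q ∈ S ∩ U, fderiv ℝ f q ≠ 0 ∧
      ∀ v : E, fderiv ℝ f q v = 0 → v ≠ 0 → 0 < fderiv ℝ (fderiv ℝ f) q v v

/-- `p` is a regular point of the projection `Π₁ : S → ℝⁿ`. -/
def RegularPointPi1 {n : ℕ} (S : Set (E2n n)) (p : E2n n) : Prop :=
  ∀ u : En n, ∃ v ∈ Submodule.span ℝ (tangentConeAt ℝ S p), P1 v = u

/-- `Π₂(S_x)`, the image under `Π₂` of the fiber `S_x = Π₁⁻¹{x}`. -/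
def FiberImage {n : ℕ} (S : Set (E2n n)) (x : En n) : Set (En n) :=
  P2 '' {p ∈ S | P1 p = x}

/-! Locally `S = {f = 0}` with `∇f ≠ 0`, and positive curvature means that the normal curvature
`D²f(w, w) / ‖∇f‖` is positive on unit tangent vectors; by compactness of `S` and of the unit
sphere it is bounded below by some `c > 0` uniformly on `S`. At a regular value `x` of `Π₁`,
`g(y) = f(x, y)` still has `∇g ≠ 0` on the fiber, so `Π₂(S_x) = {g = 0}` is a smooth hypersurface,
and for any unit normal field `ν` one has `|⟪dν(v), v⟫| = |D²g(v, v)| / ‖∇g‖`. Since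
`D²g(v, v) = D²f((0, v), (0, v))` and `‖∇g‖ ≤ ‖∇f‖`, this is at least `c‖v‖²`. -/

open Filter Set Topology
open scoped RealInnerProductSpace

structure IsLevelSetChart {E : Type*} [NormedAddCommGroup E] [NormedSpace ℝ E]
    (S U : Set E) (f : E → ℝ) : Prop where
  isOpen : IsOpen U
  contDiff : ContDiff ℝ (⊤ : ℕ∞) f
  inter_eq : S ∩ U = {q ∈ U | f q = 0}
  fderiv_ne_zero : ∀ q ∈ S ∩ U, fderiv ℝ f q ≠ 0

lemma HasDerivAt.mem_tangentConeAt {E : Type*} [NormedAddCommGroup E] [NormedSpace ℝ E]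
    {θ : ℝ → E} {w : E} {t : ℝ} {N : Set E} (hθ : HasDerivAt θ w t)
    (hN : ∀ᶠ s in 𝓝 t, θ s ∈ N) : w ∈ tangentConeAt ℝ N (θ t) := by
  have hmaps := hθ.hasFDerivAt.hasFDerivWithinAt.mapsTo_tangent_cone
    (by rw [tangentConeAt_of_mem_nhds hN]; exact mem_univ 1)
  simpa using tangentConeAt_mono (image_preimage_subset θ N) hmaps

namespace IsLevelSetChart

variable {E : Type*} [NormedAddCommGroup E] [NormedSpace ℝ E] {S U : Set E} {f : E → ℝ}
  {q v : E}

lemma apply_eq_zero (hf : IsLevelSetChart S U f) (hq : q ∈ S ∩ U) : f q = 0 := by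
  rw [hf.inter_eq] at hq; exact hq.2

lemma differentiable (hf : IsLevelSetChart S U f) : Differentiable ℝ f :=
  hf.contDiff.differentiable (by simp)

lemma contDiff_fderiv (hf : IsLevelSetChart S U f) : ContDiff ℝ (⊤ : ℕ∞) (fderiv ℝ f) :=
  hf.contDiff.fderiv_right (by exact_mod_cast le_top)

lemma fderiv_apply_eq_zero_of_mem_tangentConeAt (hf : IsLevelSetChart S U f)
    (hq : q ∈ S ∩ U) (hv : v ∈ tangentConeAt ℝ S q) : fderiv ℝ f q v = 0 := by
  rw [← tangentConeAt_inter_nhds (hf.isOpen.mem_nhds hq.2)] at hv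
  have hzero : HasFDerivWithinAt f (0 : E →L[ℝ] ℝ) (S ∩ U) q :=
    (hasFDerivWithinAt_const 0 _ _).congr (fun y hy => hf.apply_eq_zero hy)
      (hf.apply_eq_zero hq)
  simpa using (hf.differentiable q).hasFDerivAt.hasFDerivWithinAt.unique_on hzero hv

/-- The implicit function theorem provides a curve in `S` through `q` with velocity `v`. -/
lemma mem_tangentConeAt_of_fderiv_apply_eq_zero [CompleteSpace E] (hf : IsLevelSetChart S U f)
    (hq : q ∈ S ∩ U) (hv : fderiv ℝ f q v = 0) : v ∈ tangentConeAt ℝ S q := by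
  have hstrict : HasStrictFDerivAt f (fderiv ℝ f q) q :=
    hf.contDiff.contDiffAt.hasStrictFDerivAt (by simp)
  have hsurj : (fderiv ℝ f q).range = ⊤ :=
    Module.Dual.range_eq_top_of_ne_zero (f := (fderiv ℝ f q : E →ₗ[ℝ] ℝ))
      (by exact_mod_cast hf.fderiv_ne_zero q hq)
  set ψ := hstrict.implicitFunction f _ hsurj (f q)
  let z : (fderiv ℝ f q).ker := ⟨v, hv⟩
  have hψ : HasFDerivAt ψ (fderiv ℝ f q).ker.subtypeL ((0 : ℝ) • z) := by
    simpa using (hstrict.to_implicitFunction hsurj).hasFDerivAt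
  have hline : HasDerivAt (fun t : ℝ => t • z) z 0 := by
    simpa using (hasDerivAt_id (0 : ℝ)).smul_const z
  have hθ : HasDerivAt (fun t : ℝ => ψ (t • z)) v 0 :=
    HasFDerivAt.comp_hasDerivAt (f := fun t : ℝ => t • z) 0 hψ hline
  have hθ0 : ψ ((0 : ℝ) • z) = q := by
    rw [zero_smul]; exact hstrict.implicitFunction_apply_image hsurj
  have hlevel : ∀ᶠ t : ℝ in 𝓝 0, f (ψ (t • z)) = f q := by
    have hpair : Tendsto (fun t : ℝ => (f q, t • z)) (𝓝 0) (𝓝 (f q, 0)) :=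
      tendsto_const_nhds.prodMk_nhds (by simpa using hline.continuousAt.tendsto)
    exact hpair.eventually (hstrict.map_implicitFunction_eq hsurj)
  have hU : ∀ᶠ t : ℝ in 𝓝 0, ψ (t • z) ∈ U :=
    hθ.continuousAt.preimage_mem_nhds (by rw [hθ0]; exact hf.isOpen.mem_nhds hq.2)
  rw [← hθ0]
  refine hθ.mem_tangentConeAt ?_
  filter_upwards [hlevel, hU] with t hft htU
  have : ψ (t • z) ∈ S ∩ U := by
    rw [hf.inter_eq]; exact ⟨htU, hft.trans (hf.apply_eq_zero hq)⟩
  exact this.1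

lemma mem_tangentConeAt_iff [CompleteSpace E] (hf : IsLevelSetChart S U f) (hq : q ∈ S ∩ U) :
    v ∈ tangentConeAt ℝ S q ↔ fderiv ℝ f q v = 0 :=
  ⟨hf.fderiv_apply_eq_zero_of_mem_tangentConeAt hq,
    hf.mem_tangentConeAt_of_fderiv_apply_eq_zero hq⟩

end IsLevelSetChart

section InnerProductSpace

variable {E : Type*} [NormedAddCommGroup E] [InnerProductSpace ℝ E]

lemma eq_inner_smul_of_forall_inner_eq_zero {u w : E} (hw : ‖w‖ = 1)
    (h : ∀ v, ⟪w, v⟫ = 0 → ⟪u, v⟫ = 0) : u = ⟪u, w⟫ • w := by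
  have hww : ⟪w, w⟫ = 1 := by rw [real_inner_self_eq_norm_sq, hw, one_pow]
  have horth : ⟪w, u - ⟪u, w⟫ • w⟫ = 0 := by
    rw [inner_sub_right, real_inner_smul_right, hww, real_inner_comm]; ring
  have hself : ⟪u - ⟪u, w⟫ • w, u - ⟪u, w⟫ • w⟫ = 0 := by
    rw [inner_sub_left, h _ horth, real_inner_smul_left, horth]; ring
  exact (sub_eq_zero.1 (inner_self_eq_zero.1 hself))

lemma inner_smul_add_smulRight_apply_self (a : ℝ) (A : E →L[ℝ] E) (φ : E →L[ℝ] ℝ) {u v : E}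
    (huv : ⟪u, v⟫ = 0) : ⟪(a • A + φ.smulRight u) v, v⟫ = a * ⟪A v, v⟫ := by
  simp [inner_add_left, real_inner_smul_left, huv]

variable [CompleteSpace E]

lemma norm_gradient (g : E → ℝ) (y : E) : ‖gradient g y‖ = ‖fderiv ℝ g y‖ :=
  (InnerProductSpace.toDual ℝ E).symm.norm_map _

lemma exists_hasFDerivAt_gradient {g : E → ℝ} {D : E →L[ℝ] E →L[ℝ] ℝ} {q : E}
    (h : HasFDerivAt (fderiv ℝ g) D q) :
    ∃ L : E →L[ℝ] E, HasFDerivAt (gradient g) L q ∧ ∀ v w, ⟪L v, w⟫ = D v w :=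
  ⟨_, (InnerProductSpace.toDual ℝ E).symm.toContinuousLinearEquiv.hasFDerivAt.comp q h,
    fun _ _ => InnerProductSpace.toDual_symm_apply⟩

end InnerProductSpace

namespace IsLevelSetChart

variable {E : Type*} [NormedAddCommGroup E] [InnerProductSpace ℝ E] [CompleteSpace E]
  {N V : Set E} {g : E → ℝ}

lemma eq_inner_smul_unitNormal (hg : IsLevelSetChart N V g) {y u : E} (hy : y ∈ N ∩ V)
    (hu : ∀ v ∈ tangentConeAt ℝ N y, ⟪u, v⟫ = 0) :
    u = ⟪u, ‖gradient g y‖⁻¹ • gradient g y⟫ • (‖gradient g y‖⁻¹ • gradient g y) := by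
  have hgrad : gradient g y ≠ 0 := by
    rw [← norm_ne_zero_iff, norm_gradient, norm_ne_zero_iff]
    exact hg.fderiv_ne_zero y hy
  refine eq_inner_smul_of_forall_inner_eq_zero
    (by rw [norm_smul, norm_inv, norm_norm, inv_mul_cancel₀ (norm_ne_zero_iff.2 hgrad)])
    fun v hv => hu v ((hg.mem_tangentConeAt_iff hy).2 ?_)
  rwa [real_inner_smul_left, inner_gradient_left, mul_eq_zero,
    or_iff_right (inv_ne_zero (norm_ne_zero_iff.2 hgrad))] at hv

/-- Near `q`, a unit normal field is `s • n` with `n = ∇g / ‖∇g‖` and `s = ⟪ν, n⟫ = ±1`; in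
`⟪dν v, v⟫` the derivatives of `s` and of `‖∇g‖⁻¹` only produce multiples of `⟪n q, v⟫ = 0`. -/
theorem abs_inner_fderivWithin_apply_self (hg : IsLevelSetChart N V g) {ν : E → E} {q v : E}
    (hq : q ∈ N ∩ V) (hν1 : ∀ y ∈ N, ‖ν y‖ = 1)
    (hν2 : ∀ y ∈ N, ∀ v ∈ tangentConeAt ℝ N y, ⟪ν y, v⟫ = 0)
    (hν : DifferentiableWithinAt ℝ ν N q) (hv : v ∈ tangentConeAt ℝ N q) :
    |⟪fderivWithin ℝ ν N q v, v⟫| = |fderiv ℝ (fderiv ℝ g) q v v| / ‖fderiv ℝ g q‖ := by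
  set n : E → E := fun y => ‖gradient g y‖⁻¹ • gradient g y
  set s : E → ℝ := fun y => ⟪ν y, n y⟫
  have hgrad_ne : gradient g q ≠ 0 := by
    rw [← norm_ne_zero_iff, norm_gradient, norm_ne_zero_iff]
    exact hg.fderiv_ne_zero q hq
  have hgrad_v : ⟪gradient g q, v⟫ = 0 := by
    rw [inner_gradient_left]; exact (hg.mem_tangentConeAt_iff hq).1 hv
  have hD2 : HasFDerivAt (fderiv ℝ g) (fderiv ℝ (fderiv ℝ g) q) q :=
    (hg.contDiff_fderiv.differentiable (by simp) q).hasFDerivAt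
  obtain ⟨L, hgrad, hL⟩ := exists_hasFDerivAt_gradient hD2
  have hn : HasFDerivAt n (‖gradient g q‖⁻¹ • L +
      (fderiv ℝ (fun y => ‖gradient g y‖⁻¹) q).smulRight (gradient g q)) q :=
    ((hgrad.differentiableAt.norm ℝ hgrad_ne).inv (norm_ne_zero_iff.2 hgrad_ne)).hasFDerivAt.smul
      hgrad
  have hs : HasFDerivWithinAt s (fderivWithin ℝ s N q) N q :=
    (hν.inner ℝ hn.differentiableAt.differentiableWithinAt).hasFDerivWithinAt
  have hν_eq : ∀ y ∈ N ∩ V, ν y = s y • n y := fun y hy =>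
    hg.eq_inner_smul_unitNormal hy (hν2 y hy.1)
  have hν' : HasFDerivWithinAt ν (s q • (‖gradient g q‖⁻¹ • L +
      (fderiv ℝ (fun y => ‖gradient g y‖⁻¹) q).smulRight (gradient g q)) +
      (fderivWithin ℝ s N q).smulRight (n q)) N q := by
    refine (hs.smul hn.hasFDerivWithinAt).congr_of_eventuallyEq ?_ (hν_eq q hq)
    filter_upwards [self_mem_nhdsWithin, mem_nhdsWithin_of_mem_nhds (hg.isOpen.mem_nhds hq.2)]
      with y hyN hyV using hν_eq y ⟨hyN, hyV⟩
  have hs_abs : |s q| = 1 := by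
    have h := hν1 q hq.1
    rwa [hν_eq q hq, norm_smul, Real.norm_eq_abs, norm_smul, norm_inv, norm_norm,
      inv_mul_cancel₀ (norm_ne_zero_iff.2 hgrad_ne), mul_one] at h
  rw [hν.hasFDerivWithinAt.unique_on hν' hv,
    inner_smul_add_smulRight_apply_self _ _ _ (by rw [real_inner_smul_left, hgrad_v, mul_zero]),
    inner_smul_add_smulRight_apply_self _ _ _ hgrad_v, hL, abs_mul, hs_abs, one_mul, abs_mul,
    abs_inv, abs_norm, norm_gradient, inv_mul_eq_div]

end IsLevelSetChart

section NormalCurvature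

variable {E : Type*} [NormedAddCommGroup E] [NormedSpace ℝ E]

/-- For a unit tangent vector `w`, the second fundamental form of `{f = f p}` at `p` with respect
to the normal `-∇f / ‖∇f‖`. -/
def normalCurvature (f : E → ℝ) (p w : E) : ℝ :=
  fderiv ℝ (fderiv ℝ f) p w w / ‖fderiv ℝ f p‖

lemma normalCurvature_smul (f : E → ℝ) (p : E) (a : ℝ) (w : E) :
    normalCurvature f p (a • w) = a ^ 2 * normalCurvature f p w := by
  simp only [normalCurvature, map_smul, smul_apply, smul_eq_mul]
  ring

variable {S U : Set E} {f : E → ℝ}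

lemma IsLevelSetChart.exists_pos_eventually_le_normalCurvature [ProperSpace E]
    (hf : IsLevelSetChart S U f) (hS : IsClosed S) {p : E} (hpU : p ∈ U)
    (hpos : ∀ q ∈ S ∩ U, ∀ w, fderiv ℝ f q w = 0 → w ≠ 0 → 0 < fderiv ℝ (fderiv ℝ f) q w w) :
    ∃ c > 0, ∀ᶠ q in 𝓝 p, q ∈ S →
      ∀ w, fderiv ℝ f q w = 0 → c * ‖w‖ ^ 2 ≤ normalCurvature f q w := by
  obtain ⟨r, hr, hball⟩ := Metric.isOpen_iff.1 hf.isOpen p hpU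
  set K := S ∩ Metric.closedBall p (r / 2)
  have hKU : K ⊆ U := fun q hq =>
    hball (Metric.closedBall_subset_ball (half_lt_self hr) hq.2)
  have hdf : Continuous (fun x : E × E => fderiv ℝ f x.1 x.2) :=
    (hf.contDiff_fderiv.continuous.comp continuous_fst).clm_apply continuous_snd
  set T := (K ×ˢ Metric.sphere (0 : E) 1) ∩ {x | fderiv ℝ f x.1 x.2 = 0}
  have hT : IsCompact T :=
    (((isCompact_closedBall p _).inter_left hS).prod (isCompact_sphere 0 1)).inter_right
      (isClosed_eq hdf continuous_const)
  have hcont : ContinuousOn (fun x : E × E => normalCurvature f x.1 x.2) T := by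
    refine ContinuousOn.div (Continuous.continuousOn ?_)
      (hf.contDiff_fderiv.continuous.comp continuous_fst).norm.continuousOn fun x hx => ?_
    · exact (((hf.contDiff_fderiv.continuous_fderiv (by simp)).comp
        continuous_fst).clm_apply continuous_snd).clm_apply continuous_snd
    · exact norm_ne_zero_iff.2 (hf.fderiv_ne_zero _ ⟨hx.1.1.1, hKU hx.1.1⟩)
  obtain ⟨c, hc, hcT⟩ := hT.exists_forall_le' hcont (a := 0) fun x hx => by
    have hxU : x.1 ∈ S ∩ U := ⟨hx.1.1.1, hKU hx.1.1⟩
    refine div_pos (hpos x.1 hxU x.2 hx.2 ?_) (norm_pos_iff.2 (hf.fderiv_ne_zero _ hxU))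
    exact ne_zero_of_mem_unit_sphere ⟨x.2, hx.1.2⟩
  refine ⟨c, hc, ?_⟩
  filter_upwards [Metric.closedBall_mem_nhds p (half_pos hr)] with q hq hqS w hw
  rcases eq_or_ne w 0 with rfl | hw0
  · simp [normalCurvature]
  have hunit := hcT (q, ‖w‖⁻¹ • w)
    ⟨⟨⟨hqS, hq⟩, by simp [norm_smul, hw0]⟩, by simp [hw]⟩
  calc c * ‖w‖ ^ 2 ≤ ‖w‖ ^ 2 * normalCurvature f q (‖w‖⁻¹ • w) := by
        rw [mul_comm]; exact mul_le_mul_of_nonneg_left hunit (by positivity)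
    _ = normalCurvature f q w := by
        rw [← normalCurvature_smul, smul_inv_smul₀ (norm_ne_zero_iff.2 hw0)]

def HasCurvatureLowerBoundAt (S : Set E) (c : ℝ) (p : E) : Prop :=
  ∃ U f, p ∈ U ∧ IsLevelSetChart S U f ∧
    ∀ w, fderiv ℝ f p w = 0 → c * ‖w‖ ^ 2 ≤ normalCurvature f p w

lemma HasCurvatureLowerBoundAt.mono {c c' : ℝ} {p : E} (h : HasCurvatureLowerBoundAt S c p)
    (hc : c' ≤ c) : HasCurvatureLowerBoundAt S c' p := by
  obtain ⟨U, f, hpU, hf, hbound⟩ := h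
  exact ⟨U, f, hpU, hf, fun w hw =>
    (mul_le_mul_of_nonneg_right hc (sq_nonneg ‖w‖)).trans (hbound w hw)⟩

/-- Each point of `S` has a neighbourhood with a uniform bound, and a compact set is covered by
finitely many of them. -/
theorem IsCompact.exists_pos_forall_hasCurvatureLowerBoundAt [ProperSpace E] (hS : IsCompact S)
    (hpos : IsPosCurvHypersurface S) : ∃ c > 0, ∀ p ∈ S, HasCurvatureLowerBoundAt S c p := by
  refine hS.induction_on (p := fun A => ∃ c > 0, ∀ p ∈ A, HasCurvatureLowerBoundAt S c p)
    ⟨1, one_pos, fun _ h => h.elim⟩ (fun A B hAB ⟨c, hc, hB⟩ => ⟨c, hc, fun p hp => hB p (hAB hp)⟩)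
    ?_ ?_
  · rintro A B ⟨c₁, hc₁, hA⟩ ⟨c₂, hc₂, hB⟩
    exact ⟨min c₁ c₂, lt_min hc₁ hc₂, fun p hp => hp.elim
      (fun hpA => (hA p hpA).mono (min_le_left _ _))
      (fun hpB => (hB p hpB).mono (min_le_right _ _))⟩
  · intro p hp
    obtain ⟨U, f, hU, hpU, hfC, hSU, hreg⟩ := hpos p hp
    have hf : IsLevelSetChart S U f := ⟨hU, hfC, hSU, fun q hq => (hreg q hq).1⟩
    obtain ⟨c, hc, hev⟩ := hf.exists_pos_eventually_le_normalCurvature hS.isClosed hpU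
      fun q hq => (hreg q hq).2
    exact ⟨S ∩ (U ∩ {q | q ∈ S → ∀ w, fderiv ℝ f q w = 0 →
      c * ‖w‖ ^ 2 ≤ normalCurvature f q w}), inter_mem_nhdsWithin S
      (inter_mem (hU.mem_nhds hpU) hev), c, hc, fun q hq => ⟨U, f, hq.2.1, hf, hq.2.2 hq.1⟩⟩

end NormalCurvature

section AffineSlice

variable {E F : Type*} [NormedAddCommGroup E] [NormedSpace ℝ E] [NormedAddCommGroup F]
  [NormedSpace ℝ F] {S U : Set F} {f : F → ℝ} (a : F) (J : E →L[ℝ] F)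

lemma fderiv_comp_add_clm (hf : Differentiable ℝ f) (y : E) :
    fderiv ℝ (fun y => f (a + J y)) y = (fderiv ℝ f (a + J y)).comp J :=
  ((hf _).hasFDerivAt.comp y (J.hasFDerivAt.const_add a)).fderiv

lemma fderiv_fderiv_comp_add_clm (hf : ContDiff ℝ 2 f) (y v w : E) :
    fderiv ℝ (fderiv ℝ (fun y => f (a + J y))) y v w =
      fderiv ℝ (fderiv ℝ f) (a + J y) (J v) (J w) := by
  have hcomp : (fun y => f (a + J y)) = (fun z => f (a + z)) ∘ J := rfl
  have h := iteratedFDeriv_two_apply (𝕜 := ℝ) (fun y => f (a + J y)) y ![v, w]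
  rw [hcomp, J.iteratedFDeriv_comp_right (f := fun z => f (a + z))
      (hf.comp (contDiff_const.add contDiff_id)) y le_rfl,
    ContinuousMultilinearMap.compContinuousLinearMap_apply, iteratedFDeriv_comp_add_left,
    iteratedFDeriv_two_apply] at h
  simpa [hcomp] using h.symm

lemma mapsTo_tangentConeAt_preimage_add_clm (y : E) :
    MapsTo J (tangentConeAt ℝ ((fun y => a + J y) ⁻¹' S) y) (tangentConeAt ℝ S (a + J y)) :=
  fun _ hv => tangentConeAt_mono (image_preimage_subset _ S)
    ((J.hasFDerivAt.const_add a).hasFDerivWithinAt.mapsTo_tangent_cone hv)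

variable {a J}

lemma IsLevelSetChart.preimage_add_clm (hf : IsLevelSetChart S U f)
    (hJ : ∀ y, a + J y ∈ S ∩ U → (fderiv ℝ f (a + J y)).comp J ≠ 0) :
    IsLevelSetChart ((fun y => a + J y) ⁻¹' S) ((fun y => a + J y) ⁻¹' U)
      (fun y => f (a + J y)) where
  isOpen := hf.isOpen.preimage (continuous_const.add J.continuous)
  contDiff := hf.contDiff.comp (contDiff_const.add J.contDiff)
  inter_eq := by ext y; simpa using Set.ext_iff.1 hf.inter_eq (a + J y)
  fderiv_ne_zero y hy := by rw [fderiv_comp_add_clm a J hf.differentiable]; exact hJ y hy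

/-- Restricting to an isometric slice can only increase normal curvatures, since `‖∇(f ∘ J)‖`
is at most `‖∇f‖` while the Hessian along the slice is unchanged. -/
lemma IsLevelSetChart.le_abs_fderiv_fderiv_comp_add_div (hf : IsLevelSetChart S U f)
    (hJ_norm : ∀ v, ‖J v‖ = ‖v‖) {c : ℝ} {y v : E} (hy : a + J y ∈ S ∩ U)
    (hbound : ∀ w, fderiv ℝ f (a + J y) w = 0 → c * ‖w‖ ^ 2 ≤ normalCurvature f (a + J y) w)
    (hJ : (fderiv ℝ f (a + J y)).comp J ≠ 0)
    (hv : v ∈ tangentConeAt ℝ ((fun y => a + J y) ⁻¹' S) y) :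
    c * ‖v‖ ^ 2 ≤ |fderiv ℝ (fderiv ℝ (fun y => f (a + J y))) y v v| /
      ‖fderiv ℝ (fun y => f (a + J y)) y‖ := by
  have hJv := hf.fderiv_apply_eq_zero_of_mem_tangentConeAt hy
    (mapsTo_tangentConeAt_preimage_add_clm a J y hv)
  have hcurv := hbound (J v) hJv
  rw [hJ_norm] at hcurv
  rw [fderiv_comp_add_clm a J hf.differentiable,
    fderiv_fderiv_comp_add_clm a J (hf.contDiff.of_le (by norm_cast))]
  calc c * ‖v‖ ^ 2 ≤ |normalCurvature f (a + J y) (J v)| := hcurv.trans (le_abs_self _)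
    _ = |fderiv ℝ (fderiv ℝ f) (a + J y) (J v) (J v)| / ‖fderiv ℝ f (a + J y)‖ := by
        rw [normalCurvature, abs_div, abs_norm]
    _ ≤ _ := div_le_div_of_nonneg_left (abs_nonneg _) (norm_pos_iff.2 hJ)
        ((ContinuousLinearMap.opNorm_comp_le _ _).trans
          (mul_le_of_le_one_right (norm_nonneg _)
            (J.opNorm_le_bound zero_le_one fun v => by rw [hJ_norm, one_mul])))

end AffineSlice

section ProductSpace

variable {n : ℕ}

def embedLeft (x : En n) : E2n n := WithLp.toLp 2 (Sum.elim x 0)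

def embedRight (n : ℕ) : En n →L[ℝ] E2n n :=
  LinearMap.toContinuousLinearMap
    { toFun := fun y => WithLp.toLp 2 (Sum.elim 0 y)
      map_add' := fun y y' => by ext (i | i) <;> simp
      map_smul' := fun t y => by ext (i | i) <;> simp }

@[simp] lemma embedRight_apply_inl (y : En n) (i : Fin n) : embedRight n y (Sum.inl i) = 0 := rfl

@[simp] lemma embedRight_apply_inr (y : En n) (i : Fin n) : embedRight n y (Sum.inr i) = y i :=
  rfl

lemma norm_embedRight (y : En n) : ‖embedRight n y‖ = ‖y‖ := by
  simp [EuclideanSpace.norm_eq, Fintype.sum_sum_type]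

lemma embedLeft_add_embedRight (z : E2n n) : embedLeft (P1 z) + embedRight n (P2 z) = z := by
  ext (i | i) <;> simp [embedLeft, P1, P2]

@[simp] lemma P1_embedLeft_add_embedRight (x y : En n) :
    P1 (embedLeft x + embedRight n y) = x := by
  ext i; simp [embedLeft, P1]

@[simp] lemma P2_embedLeft_add_embedRight (x y : En n) :
    P2 (embedLeft x + embedRight n y) = y := by
  ext i; simp [embedLeft, P2]

lemma fiberImage_eq_preimage (S : Set (E2n n)) (x : En n) :
    FiberImage S x = (fun y => embedLeft x + embedRight n y) ⁻¹' S := by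
  ext y
  constructor
  · rintro ⟨p, ⟨hpS, rfl⟩, rfl⟩
    rwa [mem_preimage, embedLeft_add_embedRight]
  · intro hy
    exact ⟨_, ⟨hy, P1_embedLeft_add_embedRight x y⟩, P2_embedLeft_add_embedRight x y⟩

/-- Every `z` is `v + (0, w)` with `v` in the span of the tangent cone, since `Π₁` maps that
span onto `ℝⁿ`. -/
lemma RegularPointPi1.comp_embedRight_ne_zero {S : Set (E2n n)} {p : E2n n}
    (hp : RegularPointPi1 S p) {L : E2n n →L[ℝ] ℝ} (hL : L ≠ 0)
    (hker : ∀ v ∈ tangentConeAt ℝ S p, L v = 0) : L.comp (embedRight n) ≠ 0 := by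
  intro hvert
  refine hL (ContinuousLinearMap.ext fun z => ?_)
  obtain ⟨v, hv, hvz⟩ := hp (P1 z)
  have hLv : L v = 0 :=
    Submodule.span_le (p := LinearMap.ker (L : E2n n →ₗ[ℝ] ℝ)).2 hker hv
  have hz : z = v + embedRight n (P2 z - P2 v) := by
    ext (i | i)
    · simpa [P1] using congrArg (· i) hvz.symm
    · simp [P2]
  rw [hz, map_add, hLv, ← ContinuousLinearMap.comp_apply, hvert]
  simp

variable {S U : Set (E2n n)} {f : E2n n → ℝ} {x : En n}

lemma IsLevelSetChart.fderiv_comp_embedRight_ne_zero (hf : IsLevelSetChart S U f)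
    (hreg : ∀ p ∈ S, P1 p = x → RegularPointPi1 S p) {y : En n}
    (hy : embedLeft x + embedRight n y ∈ S ∩ U) :
    (fderiv ℝ f (embedLeft x + embedRight n y)).comp (embedRight n) ≠ 0 :=
  (hreg _ hy.1 (P1_embedLeft_add_embedRight x y)).comp_embedRight_ne_zero
    (hf.fderiv_ne_zero _ hy) fun _ hv => hf.fderiv_apply_eq_zero_of_mem_tangentConeAt hy hv

lemma IsLevelSetChart.fiberImage (hf : IsLevelSetChart S U f)
    (hreg : ∀ p ∈ S, P1 p = x → RegularPointPi1 S p) :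
    IsLevelSetChart (FiberImage S x) ((fun y => embedLeft x + embedRight n y) ⁻¹' U)
      (fun y => f (embedLeft x + embedRight n y)) := by
  rw [fiberImage_eq_preimage]
  exact hf.preimage_add_clm fun _ hy => hf.fderiv_comp_embedRight_ne_zero hreg hy

end ProductSpace

theorem statement2_general (n : ℕ)
    (S : Set (E2n n)) (hScpt : IsCompact S)
    (hS : IsPosCurvHypersurface S) :
    ∃ c : ℝ, 0 < c ∧
      ∀ x : En n,
        (x ∈ P1 '' S ∧ ∀ p ∈ S, P1 p = x → RegularPointPi1 S p) →
        IsSmoothHypersurface (FiberImage S x) ∧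
        ∀ ν : En n → En n,
          (∀ q ∈ FiberImage S x, ‖ν q‖ = 1) →
          (∀ q ∈ FiberImage S x, ∀ v ∈ tangentConeAt ℝ (FiberImage S x) q,
            (@inner ℝ _ _ (ν q) v : ℝ) = 0) →
          (∀ q ∈ FiberImage S x, DifferentiableWithinAt ℝ ν (FiberImage S x) q) →
          ∀ q ∈ FiberImage S x, ∀ v ∈ tangentConeAt ℝ (FiberImage S x) q,
            c * ‖v‖ ^ 2 ≤
              |(@inner ℝ _ _ (fderivWithin ℝ ν (FiberImage S x) q v) v : ℝ)| := by
  obtain ⟨c, hc, hbound⟩ := hScpt.exists_pos_forall_hasCurvatureLowerBoundAt hS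
  refine ⟨c, hc, fun x ⟨_, hreg⟩ => ?_⟩
  have hmem : ∀ q ∈ FiberImage S x, embedLeft x + embedRight n q ∈ S := by
    rw [fiberImage_eq_preimage]; exact fun q hq => hq
  refine ⟨fun q hq => ?_, fun ν hν1 hν2 hν3 q hq v hv => ?_⟩ <;>
    obtain ⟨U, f, hpU, hf, hf_bound⟩ := hbound _ (hmem q hq)
  · have hN := hf.fiberImage hreg
    exact ⟨_, _, hN.isOpen, hpU, hN.contDiff, hN.inter_eq, hN.fderiv_ne_zero⟩
  · rw [(hf.fiberImage hreg).abs_inner_fderivWithin_apply_self ⟨hq, hpU⟩ hν1 hν2 (hν3 q hq) hv]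
    rw [fiberImage_eq_preimage] at hv
    exact hf.le_abs_fderiv_fderiv_comp_add_div norm_embedRight ⟨hmem q hq, hpU⟩ hf_bound
      (hf.fderiv_comp_embedRight_ne_zero hreg ⟨hmem q hq, hpU⟩) hv

theorem statement2 (n : ℕ) (hn : 2 ≤ n)
    (S : Set (E2n n)) (hScpt : IsCompact S) (hSconn : IsConnected S)
    (hS : IsPosCurvHypersurface S) :
    ∃ c : ℝ, 0 < c ∧
      ∀ x : En n,
        (x ∈ P1 '' S ∧ ∀ p ∈ S, P1 p = x → RegularPointPi1 S p) →
        IsSmoothHypersurface (FiberImage S x) ∧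
        ∀ ν : En n → En n,
          (∀ q ∈ FiberImage S x, ‖ν q‖ = 1) →
          (∀ q ∈ FiberImage S x, ∀ v ∈ tangentConeAt ℝ (FiberImage S x) q,
            (@inner ℝ _ _ (ν q) v : ℝ) = 0) →
          (∀ q ∈ FiberImage S x, DifferentiableWithinAt ℝ ν (FiberImage S x) q) →
          ∀ q ∈ FiberImage S x, ∀ v ∈ tangentConeAt ℝ (FiberImage S x) q,
            c * ‖v‖ ^ 2 ≤
              |(@inner ℝ _ _ (fderivWithin ℝ ν (FiberImage S x) q v) v : ℝ)| :=
  statement2_general n S hScpt hS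
end
end

section
/- Let R > 0 and α < 0. If f ∈ L¹_loc(ℝⁿ) satisfies f(t) = O(‖t‖^α) as ‖t‖ → ∞, and g = f * χ_{B_R} is the convolution of f with the indicator function of the ball B_R of radius R centered at the origin, then g(t) = O(‖t‖^α) as ‖t‖ → ∞. -/
open MeasureTheory

noncomputable section

/-!
For `‖t‖ ≥ 2R` every point `t - u` with `‖u‖ ≤ R` has norm at least `‖t‖ / 2`, so on the
translated ball the decay bound gives `|f (t - u)| ≤ C (‖t‖ / 2) ^ α = C 2 ^ (-α) ‖t‖ ^ α`
(this is where `α ≤ 0` enters). Integrating over a ball of finite measure only multiplies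
the constant by its volume.
-/

lemma norm_div_two_le_norm_sub {E : Type*} [SeminormedAddCommGroup E] {R : ℝ} {t u : E}
    (ht : 2 * R ≤ ‖t‖) (hu : ‖u‖ ≤ R) : ‖t‖ / 2 ≤ ‖t - u‖ := by
  linarith [norm_sub_norm_le t u]

lemma Real.rpow_le_two_rpow_neg_mul_rpow {x y α : ℝ} (hx : 0 < x) (hxy : x / 2 ≤ y)
    (hα : α ≤ 0) : y ^ α ≤ 2 ^ (-α) * x ^ α :=
  calc y ^ α ≤ (x / 2) ^ α := Real.rpow_le_rpow_of_nonpos (by positivity) hxy hα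
    _ = 2 ^ (-α) * x ^ α := by
      rw [Real.div_rpow hx.le zero_le_two, Real.rpow_neg zero_le_two, div_eq_inv_mul]

section

variable {E F : Type*} [NormedAddCommGroup E] [NormedAddCommGroup F]
  {f : E → F} {R α C M : ℝ}

lemma norm_comp_sub_le_of_mem_closedBall (hα : α ≤ 0)
    (hbound : ∀ t : E, M ≤ ‖t‖ → ‖f t‖ ≤ C * ‖t‖ ^ α) {t u : E}
    (ht : max (max (M + R) (2 * R)) 1 ≤ ‖t‖) (hu : u ∈ Metric.closedBall (0 : E) R) :
    ‖f (t - u)‖ ≤ max C 0 * 2 ^ (-α) * ‖t‖ ^ α := by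
  rw [mem_closedBall_zero_iff] at hu
  simp only [max_le_iff] at ht
  obtain ⟨⟨htM, htR⟩, ht1⟩ := ht
  have hM : M ≤ ‖t - u‖ := by linarith [norm_sub_norm_le t u]
  calc ‖f (t - u)‖ ≤ C * ‖t - u‖ ^ α := hbound _ hM
    _ ≤ max C 0 * ‖t - u‖ ^ α := by gcongr; exact le_max_left C 0
    _ ≤ max C 0 * (2 ^ (-α) * ‖t‖ ^ α) := by
      gcongr
      exact Real.rpow_le_two_rpow_neg_mul_rpow (by linarith)
        (norm_div_two_le_norm_sub htR hu) hα
    _ = max C 0 * 2 ^ (-α) * ‖t‖ ^ α := (mul_assoc _ _ _).symm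

theorem exists_norm_setIntegral_closedBall_comp_sub_le [MeasurableSpace E] [NormedSpace ℝ F]
    (μ : Measure E) (hμ : μ (Metric.closedBall 0 R) < ⊤) (hα : α ≤ 0)
    (hbound : ∀ t : E, M ≤ ‖t‖ → ‖f t‖ ≤ C * ‖t‖ ^ α) :
    ∃ C' M' : ℝ, ∀ t : E, M' ≤ ‖t‖ →
      ‖∫ u in Metric.closedBall (0 : E) R, f (t - u) ∂μ‖ ≤ C' * ‖t‖ ^ α := by
  refine ⟨max C 0 * 2 ^ (-α) * μ.real (Metric.closedBall 0 R), max (max (M + R) (2 * R)) 1,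
    fun t ht => ?_⟩
  calc ‖∫ u in Metric.closedBall (0 : E) R, f (t - u) ∂μ‖
      ≤ max C 0 * 2 ^ (-α) * ‖t‖ ^ α * μ.real (Metric.closedBall 0 R) :=
        norm_setIntegral_le_of_norm_le_const_ae' hμ (Filter.Eventually.of_forall
          fun u hu => norm_comp_sub_le_of_mem_closedBall hα hbound ht hu)
    _ = max C 0 * 2 ^ (-α) * μ.real (Metric.closedBall 0 R) * ‖t‖ ^ α := by ring

end

theorem statement3_general (n : ℕ) (R α : ℝ) (hα : α < 0)
    (f : En n → ℝ)
    (C M : ℝ) (hbound : ∀ t : En n, M ≤ ‖t‖ → |f t| ≤ C * ‖t‖ ^ α)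
    (g : En n → ℝ)
    (hg : ∀ t : En n, g t = ∫ u in Metric.closedBall (0 : En n) R, f (t - u)) :
    ∃ C' M' : ℝ, ∀ t : En n, M' ≤ ‖t‖ → |g t| ≤ C' * ‖t‖ ^ α := by
  obtain ⟨C', M', hg_le⟩ := exists_norm_setIntegral_closedBall_comp_sub_le volume
    measure_closedBall_lt_top hα.le (f := f) (by simpa only [Real.norm_eq_abs] using hbound)
  exact ⟨C', M', fun t ht => by simpa only [hg t, Real.norm_eq_abs] using hg_le t ht⟩

theorem statement3 (n : ℕ) (R α : ℝ) (hR : 0 < R) (hα : α < 0)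
    (f : En n → ℝ) (hf : LocallyIntegrable f (volume : Measure (En n)))
    (C M : ℝ) (hbound : ∀ t : En n, M ≤ ‖t‖ → |f t| ≤ C * ‖t‖ ^ α)
    (g : En n → ℝ)
    (hg : ∀ t : En n, g t = ∫ u in Metric.closedBall (0 : En n) R, f (t - u)) :
    ∃ C' M' : ℝ, ∀ t : En n, M' ≤ ‖t‖ → |g t| ≤ C' * ‖t‖ ^ α :=
  statement3_general n R α hα f C M hbound g hg

end
end

section
/- Let n ≥ 6 and let k : ℝⁿ × ℝⁿ → ℂ be a twice differentiable kernel for which there exist constants C, C₅, R > 0 such that |k(t,u)| ≤ C‖t+u‖^{(1−n)/2} for all t,u; |Δ_t k(t,u)| ≤ C₅‖t+u‖^{(5−n)/2} for all sufficiently large ‖t‖; and k(t,u) = 0 whenever ‖t−u‖ > R. Then there is a constant C₆ such that ∫ |(−Δ_t + ‖t‖²) k(t,u)| du ≤ C₆ ‖t‖^{(5−n)/2} for all sufficiently large ‖t‖; in particular this integral tends to 0 as ‖t‖ → ∞. -/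
/- STATEMENT 17:
Let n ≥ 6 and let k : ℝⁿ × ℝⁿ → ℂ be a twice differentiable kernel for which
there exist constants C, C₅, R > 0 such that |k(t,u)| ≤ C‖t+u‖^{(1−n)/2} for
all t,u; |Δ_t k(t,u)| ≤ C₅‖t+u‖^{(5−n)/2} for all sufficiently large ‖t‖; and
k(t,u) = 0 whenever ‖t−u‖ > R.  Then there is a constant C₆ such that
∫ |(−Δ_t + ‖t‖²) k(t,u)| du ≤ C₆ ‖t‖^{(5−n)/2} for all sufficiently large ‖t‖;
in particular this integral tends to 0 as ‖t‖ → ∞. -/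

open MeasureTheory Filter

noncomputable section

/-- The Laplacian `Δg(t) = ∑ i, ∂²g/∂tᵢ²` of a function on ℝⁿ. -/
def lap {n : ℕ} (g : En n → ℂ) (t : En n) : ℂ :=
  ∑ i : Fin n,
    fderiv ℝ (fun s => fderiv ℝ g s (EuclideanSpace.single i (1 : ℝ))) t
      (EuclideanSpace.single i (1 : ℝ))

/-! Off the strip `‖t - u‖ ≤ R` the kernel vanishes near `t`, so the integrand is zero there.
On the strip, once `‖t‖ ≥ R` we have `‖t + u‖ ≥ 2‖t‖ - ‖t - u‖ ≥ ‖t‖`, so the decay hypotheses give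
`‖Δₜk‖ ≤ C₅‖t‖^{(5-n)/2}` and `‖t‖²‖k‖ ≤ C‖t‖^{2 + (1-n)/2} = C‖t‖^{(5-n)/2}`.
Integrating over a ball of radius `R`, whose volume does not depend on `t`, gives the bound,
and `(5 - n)/2 < 0` gives the limit. -/

open Metric Bornology

theorem lap_congr {n : ℕ} {g₁ g₂ : En n → ℂ} {t : En n} (h : g₁ =ᶠ[nhds t] g₂) :
    lap g₁ t = lap g₂ t := by
  refine Finset.sum_congr rfl fun i _ => ?_
  have hi : (fun s => fderiv ℝ g₁ s (EuclideanSpace.single i 1)) =ᶠ[nhds t]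
      fun s => fderiv ℝ g₂ s (EuclideanSpace.single i 1) :=
    (h.fderiv (𝕜 := ℝ)).mono fun s hs => by simp only [hs]
  rw [hi.fderiv_eq]

theorem lap_zero {n : ℕ} (t : En n) : lap 0 t = 0 := by
  simp [lap]

def harmonicOscillator {n : ℕ} (g : En n → ℂ) (t : En n) : ℂ :=
  -lap g t + ((‖t‖ ^ 2 : ℝ) : ℂ) * g t

theorem norm_le_norm_add_of_norm_sub_le {E : Type*} [SeminormedAddCommGroup E]
    [NormedSpace ℝ E] {t u : E} (h : ‖t - u‖ ≤ ‖t‖) : ‖t‖ ≤ ‖t + u‖ := by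
  have h2t : ‖(2 : ℝ) • t‖ = 2 * ‖t‖ := by rw [norm_smul]; norm_num
  calc ‖t‖ ≤ ‖(2 : ℝ) • t‖ - ‖t - u‖ := by linarith
    _ ≤ ‖(2 : ℝ) • t - (t - u)‖ := norm_sub_norm_le _ _
    _ = ‖t + u‖ := by congr 1; module

theorem integral_le_of_le_indicator_closedBall {E : Type*} [NormedAddCommGroup E]
    [NormedSpace ℝ E] [FiniteDimensional ℝ E] [MeasurableSpace E] [BorelSpace E]
    (μ : Measure E) [μ.IsAddHaarMeasure] {f : E → ℝ} (hf : 0 ≤ f) {x : E} {r c : ℝ}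
    (hle : f ≤ (closedBall x r).indicator fun _ => c) :
    ∫ y, f y ∂μ ≤ μ.real (closedBall 0 r) * c := by
  have hint : Integrable ((closedBall x r).indicator fun _ => c) μ :=
    (integrable_indicator_iff measurableSet_closedBall).mpr
      (integrableOn_const measure_closedBall_lt_top.ne)
  calc ∫ y, f y ∂μ ≤ ∫ y, (closedBall x r).indicator (fun _ => c) y ∂μ :=
        integral_mono_of_nonneg (.of_forall hf) hint (.of_forall hle)
    _ = μ.real (closedBall 0 r) * c := by
        rw [integral_indicator_const _ measurableSet_closedBall,
          Measure.addHaar_real_closedBall_center, smul_eq_mul]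

theorem tendsto_cobounded_nhds_zero_of_le_mul_rpow {E : Type*} [SeminormedAddCommGroup E]
    {f : E → ℝ} (hf : 0 ≤ f) {c p M : ℝ} (hp : p < 0) (hle : ∀ x, M ≤ ‖x‖ → f x ≤ c * ‖x‖ ^ p) :
    Tendsto f (cobounded E) (nhds 0) := by
  have hnorm := tendsto_norm_cobounded_atTop (E := E)
  have hpow : Tendsto (fun y : ℝ => c * y ^ p) atTop (nhds 0) := by
    simpa using (tendsto_rpow_neg_atTop (neg_pos.mpr hp)).const_mul c
  exact squeeze_zero' (.of_forall hf) ((hnorm.eventually_ge_atTop M).mono hle) (hpow.comp hnorm)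

section Kernel

variable {n : ℕ} {k : En n → En n → ℂ} {R : ℝ}

theorem harmonicOscillator_eq_zero_of_lt_norm_sub
    (hsupp : ∀ t u : En n, R < ‖t - u‖ → k t u = 0) {t u : En n} (h : R < ‖t - u‖) :
    harmonicOscillator (fun s => k s u) t = 0 := by
  have hfar : ∀ᶠ s in nhds t, R < ‖s - u‖ :=
    (isOpen_lt continuous_const (by fun_prop)).mem_nhds h
  have hzero : (fun s => k s u) =ᶠ[nhds t] 0 := hfar.mono fun s hs => hsupp s u hs
  rw [harmonicOscillator, lap_congr hzero, lap_zero, hzero.eq_of_nhds]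
  simp

theorem norm_harmonicOscillator_le (hn : 6 ≤ n) {C C₅ M : ℝ} (hC : 0 < C) (hC₅ : 0 < C₅)
    (hbound : ∀ t u : En n, t + u ≠ 0 → ‖k t u‖ ≤ C * ‖t + u‖ ^ ((1 - n : ℝ) / 2))
    (hlap : ∀ t u : En n, M ≤ ‖t‖ → t + u ≠ 0 →
      ‖lap (fun s => k s u) t‖ ≤ C₅ * ‖t + u‖ ^ ((5 - n : ℝ) / 2))
    {t u : En n} (htM : M ≤ ‖t‖) (ht : 0 < ‖t‖) (htu : ‖t‖ ≤ ‖t + u‖) :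
    ‖harmonicOscillator (fun s => k s u) t‖ ≤ (C₅ + C) * ‖t‖ ^ ((5 - n : ℝ) / 2) := by
  have htu₀ : t + u ≠ 0 := norm_pos_iff.mp (ht.trans_le htu)
  have hn' : (6 : ℝ) ≤ n := by exact_mod_cast hn
  have hlap' : ‖lap (fun s => k s u) t‖ ≤ C₅ * ‖t‖ ^ ((5 - n : ℝ) / 2) :=
    (hlap t u htM htu₀).trans <| mul_le_mul_of_nonneg_left
      (Real.rpow_le_rpow_of_nonpos ht htu (by linarith)) hC₅.le
  have hk : ‖k t u‖ ≤ C * ‖t‖ ^ ((1 - n : ℝ) / 2) :=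
    (hbound t u htu₀).trans <| mul_le_mul_of_nonneg_left
      (Real.rpow_le_rpow_of_nonpos ht htu (by linarith)) hC.le
  have hpow : ‖t‖ ^ 2 * ‖t‖ ^ ((1 - n : ℝ) / 2) = ‖t‖ ^ ((5 - n : ℝ) / 2) := by
    rw [← Real.rpow_natCast, ← Real.rpow_add ht]
    ring_nf
  calc ‖harmonicOscillator (fun s => k s u) t‖
      ≤ ‖lap (fun s => k s u) t‖ + ‖t‖ ^ 2 * ‖k t u‖ := by
        refine (norm_add_le _ _).trans_eq ?_
        rw [norm_neg, norm_mul, Complex.norm_real, Real.norm_of_nonneg (by positivity)]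
    _ ≤ C₅ * ‖t‖ ^ ((5 - n : ℝ) / 2) + ‖t‖ ^ 2 * (C * ‖t‖ ^ ((1 - n : ℝ) / 2)) := by
        gcongr
    _ = (C₅ + C) * ‖t‖ ^ ((5 - n : ℝ) / 2) := by
        rw [mul_left_comm, hpow]
        ring

theorem norm_harmonicOscillator_le_indicator (hn : 6 ≤ n) {C C₅ M : ℝ} (hC : 0 < C)
    (hC₅ : 0 < C₅) (hR : 0 < R)
    (hbound : ∀ t u : En n, t + u ≠ 0 → ‖k t u‖ ≤ C * ‖t + u‖ ^ ((1 - n : ℝ) / 2))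
    (hlap : ∀ t u : En n, M ≤ ‖t‖ → t + u ≠ 0 →
      ‖lap (fun s => k s u) t‖ ≤ C₅ * ‖t + u‖ ^ ((5 - n : ℝ) / 2))
    (hsupp : ∀ t u : En n, R < ‖t - u‖ → k t u = 0) {t : En n} (ht : max M R ≤ ‖t‖)
    (u : En n) :
    ‖harmonicOscillator (fun s => k s u) t‖ ≤
      (closedBall t R).indicator (fun _ => (C₅ + C) * ‖t‖ ^ ((5 - n : ℝ) / 2)) u := by
  obtain ⟨htM, htR⟩ := max_le_iff.mp ht
  by_cases hu : u ∈ closedBall t R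
  · rw [Set.indicator_of_mem hu]
    have hnear : ‖t - u‖ ≤ ‖t‖ := by
      rw [← dist_eq_norm]
      exact (mem_closedBall'.mp hu).trans htR
    exact norm_harmonicOscillator_le hn hC hC₅ hbound hlap htM (hR.trans_le htR)
      (norm_le_norm_add_of_norm_sub_le hnear)
  · rw [Set.indicator_of_notMem hu, harmonicOscillator_eq_zero_of_lt_norm_sub hsupp, norm_zero]
    rwa [mem_closedBall', not_le, dist_eq_norm] at hu

end Kernel

theorem statement17_general (n : ℕ) (hn : 6 ≤ n) (k : En n → En n → ℂ)
    (C C₅ R M : ℝ) (hC : 0 < C) (hC₅ : 0 < C₅) (hR : 0 < R)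
    (hbound : ∀ t u : En n, t + u ≠ 0 → ‖k t u‖ ≤ C * ‖t + u‖ ^ ((1 - n : ℝ) / 2))
    (hlap : ∀ t u : En n, M ≤ ‖t‖ → t + u ≠ 0 →
      ‖lap (fun s => k s u) t‖ ≤ C₅ * ‖t + u‖ ^ ((5 - n : ℝ) / 2))
    (hsupp : ∀ t u : En n, R < ‖t - u‖ → k t u = 0) :
    (∃ C₆ M' : ℝ, ∀ t : En n, M' ≤ ‖t‖ →
        (∫ u : En n, ‖-(lap (fun s => k s u) t) + ((‖t‖ ^ 2 : ℝ) : ℂ) * k t u‖)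
          ≤ C₆ * ‖t‖ ^ ((5 - n : ℝ) / 2)) ∧
    Tendsto
      (fun t : En n =>
        ∫ u : En n, ‖-(lap (fun s => k s u) t) + ((‖t‖ ^ 2 : ℝ) : ℂ) * k t u‖)
      (Bornology.cobounded (En n)) (nhds 0) := by
  have hdecay : ∀ t : En n, max M R ≤ ‖t‖ →
      ∫ u, ‖harmonicOscillator (fun s => k s u) t‖ ≤
        volume.real (closedBall (0 : En n) R) * (C₅ + C) * ‖t‖ ^ ((5 - n : ℝ) / 2) :=
    fun t ht => (integral_le_of_le_indicator_closedBall volume (fun u => norm_nonneg _)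
      (norm_harmonicOscillator_le_indicator hn hC hC₅ hR hbound hlap hsupp ht)).trans_eq
        (mul_assoc _ _ _).symm
  have hexp : (5 - n : ℝ) / 2 < 0 := by
    have : (6 : ℝ) ≤ n := by exact_mod_cast hn
    linarith
  exact ⟨⟨_, _, hdecay⟩, tendsto_cobounded_nhds_zero_of_le_mul_rpow
    (fun t => integral_nonneg fun u => norm_nonneg _) hexp hdecay⟩

theorem statement17 (n : ℕ) (hn : 6 ≤ n) (k : En n → En n → ℂ)
    (hksmooth : ∀ u : En n, ContDiff ℝ 2 (fun t => k t u))
    (C C₅ R M : ℝ) (hC : 0 < C) (hC₅ : 0 < C₅) (hR : 0 < R)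
    (hbound : ∀ t u : En n, t + u ≠ 0 → ‖k t u‖ ≤ C * ‖t + u‖ ^ ((1 - n : ℝ) / 2))
    (hlap : ∀ t u : En n, M ≤ ‖t‖ → t + u ≠ 0 →
      ‖lap (fun s => k s u) t‖ ≤ C₅ * ‖t + u‖ ^ ((5 - n : ℝ) / 2))
    (hsupp : ∀ t u : En n, R < ‖t - u‖ → k t u = 0) :
    (∃ C₆ M' : ℝ, ∀ t : En n, M' ≤ ‖t‖ →
        (∫ u : En n, ‖-(lap (fun s => k s u) t) + ((‖t‖ ^ 2 : ℝ) : ℂ) * k t u‖)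
          ≤ C₆ * ‖t‖ ^ ((5 - n : ℝ) / 2)) ∧
    Tendsto
      (fun t : En n =>
        ∫ u : En n, ‖-(lap (fun s => k s u) t) + ((‖t‖ ^ 2 : ℝ) : ℂ) * k t u‖)
      (Bornology.cobounded (En n)) (nhds 0) :=
  statement17_general n hn k C C₅ R M hC hC₅ hR hbound hlap hsupp
end
end
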